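/- Fix b with 0 < b ≤ 1 and define K_b(z) := (1/(2π)) ∫_{−1}^{1} (j_F(α)/cosh(bα)) e^{izα} dα for z ∈ ℂ, where j_F(α) := max{1 − |α|, 0}. Then there is a constant C > 0 (which may depend on b) such that |K_b(z)| ≤ C e^{|Im z|}/(1 + |z|²) for all z ∈ ℂ. -/

import Mathlib

open Filter Topology MeasureTheory Set

/-- The Fejér kernel `j_F(α) = max{1 - |α|, 0}`. -/
noncomputable def jF (α : ℝ) : ℝ := max (1 - |α|) 0

/-- The Tsang kernel `K_b(z) = (1/(2π)) ∫_{-1}^{1} (j_F(α)/cosh(bα)) e^{izα} dα`. -/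
noncomputable def Kb (b : ℝ) (z : ℂ) : ℂ :=
  (1 / (2 * Real.pi)) * ∫ α in (-1 : ℝ)..1,
    ((jF α / Real.cosh (b * α) : ℝ) : ℂ) * Complex.exp (Complex.I * z * α)

/-!
Split `∫_{-1}^{1}` at the kink of `j_F`: with `g α = (1 - α) / cosh (b α)`, which is smooth with
`g 1 = 0`, one has `2π K_b(z) = J(z) + J(-z)` for `J(w) = ∫_0^1 g(α) e^{iwα} dα`. The trivial
bound gives `|J(w)| ≤ C e^{|Im w|}`. Integrating by parts twice, the boundary terms `g(0)/(iw)`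
coming from `0` cancel in `J(z) + J(-z)`, so `z² (J(z) + J(-z))` is again a combination of
boundary values of `g'` and transforms of `g''`, each `O(e^{|Im z|})`.
-/

open Complex

noncomputable def fourierUnitInterval (u : ℝ → ℝ) (w : ℂ) : ℂ :=
  ∫ α in (0 : ℝ)..1, (u α : ℂ) * cexp (I * w * α)

lemma norm_cexp_I_mul_le {α : ℝ} (w : ℂ) (hα : α ∈ Icc (0 : ℝ) 1) :
    ‖cexp (I * w * α)‖ ≤ Real.exp |w.im| := by
  rw [norm_exp, Real.exp_le_exp]
  have hre : (I * w * α).re = -w.im * α := by simp [mul_re]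
  obtain ⟨h0, h1⟩ := hα
  rw [hre]
  nlinarith [neg_abs_le w.im, abs_nonneg w.im]

lemma exists_norm_fourierUnitInterval_le {u : ℝ → ℝ} (hu : Continuous u) :
    ∃ M > 0, ∀ w, ‖fourierUnitInterval u w‖ ≤ M * Real.exp |w.im| := by
  obtain ⟨M, hM⟩ := isCompact_Icc.exists_bound_of_continuousOn (hu.continuousOn (s := Icc 0 1))
  refine ⟨max M 1, by positivity, fun w => ?_⟩
  refine (intervalIntegral.norm_integral_le_of_norm_le_const fun α hα => ?_).trans_eq
    (by rw [sub_zero, abs_one, mul_one])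
  rw [uIoc_of_le zero_le_one] at hα
  replace hα := Ioc_subset_Icc_self hα
  rw [norm_mul, norm_real]
  exact mul_le_mul ((hM α hα).trans (le_max_left _ _)) (norm_cexp_I_mul_le w hα)
    (norm_nonneg _) (by positivity)

lemma I_mul_mul_fourierUnitInterval {u : ℝ → ℝ} (hu : ContDiff ℝ 1 u) (w : ℂ) :
    I * w * fourierUnitInterval u w =
      (u 1 : ℂ) * cexp (I * w) - (u 0 : ℂ) - fourierUnitInterval (deriv u) w := by
  obtain ⟨hdiff, hcont⟩ := contDiff_one_iff_deriv.mp hu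
  have hderiv (x : ℝ) : HasDerivAt (fun α : ℝ => (u α : ℂ) * cexp (I * w * α))
      ((deriv u x : ℝ) * cexp (I * w * x) + I * w * ((u x : ℂ) * cexp (I * w * x))) x := by
    have he : HasDerivAt (fun α : ℝ => cexp (I * w * α)) (cexp (I * w * x) * (I * w)) x := by
      simpa using ((ofRealCLM.hasDerivAt (x := x)).const_mul (I * w)).cexp
    exact ((hdiff x).hasDerivAt.ofReal_comp.mul he).congr_deriv (by ring)
  have hint (v : ℝ → ℝ) (hv : Continuous v) :
      IntervalIntegrable (fun α : ℝ => (v α : ℂ) * cexp (I * w * α)) volume 0 1 :=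
    (by fun_prop : Continuous fun α : ℝ => (v α : ℂ) * cexp (I * w * α)).intervalIntegrable _ _
  have hftc := intervalIntegral.integral_eq_sub_of_hasDerivAt (fun x _ => hderiv x)
    ((hint _ hcont).add ((hint _ hdiff.continuous).const_mul (I * w)))
  rw [intervalIntegral.integral_add (hint _ hcont) ((hint _ hdiff.continuous).const_mul _),
    intervalIntegral.integral_const_mul] at hftc
  simp only [ofReal_zero, mul_zero, Complex.exp_zero, mul_one, ofReal_one] at hftc
  unfold fourierUnitInterval
  linear_combination hftc

lemma sq_mul_fourierUnitInterval_add_neg {u : ℝ → ℝ} (hu : ContDiff ℝ 2 u) (hu1 : u 1 = 0)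
    (z : ℂ) :
    z ^ 2 * (fourierUnitInterval u z + fourierUnitInterval u (-z)) =
      (deriv u 1 : ℝ) * (cexp (I * z) + cexp (I * -z)) - 2 * (deriv u 0 : ℝ) -
        (fourierUnitInterval (deriv (deriv u)) z +
          fourierUnitInterval (deriv (deriv u)) (-z)) := by
  have hu' : ContDiff ℝ 1 (deriv u) := ContDiff.deriv' (n := 1) hu
  have twice (w : ℂ) : (I * w) ^ 2 * fourierUnitInterval u w = -(I * w * u 0) -
      ((deriv u 1 : ℝ) * cexp (I * w) - (deriv u 0 : ℝ) -
        fourierUnitInterval (deriv (deriv u)) w) := by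
    rw [sq, mul_assoc, I_mul_mul_fourierUnitInterval (hu.of_le (by norm_num)), hu1, mul_sub,
      I_mul_mul_fourierUnitInterval hu']
    push_cast
    ring
  linear_combination -twice z - twice (-z) +
    z ^ 2 * (fourierUnitInterval u z + fourierUnitInterval u (-z)) * I_sq

lemma exists_norm_fourierUnitInterval_add_neg_le {u : ℝ → ℝ} (hu : ContDiff ℝ 2 u)
    (hu1 : u 1 = 0) :
    ∃ C > 0, ∀ z : ℂ, ‖fourierUnitInterval u z + fourierUnitInterval u (-z)‖ ≤
      C * Real.exp |z.im| / (1 + ‖z‖ ^ 2) := by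
  obtain ⟨A, hA, hJ⟩ := exists_norm_fourierUnitInterval_le hu.continuous
  obtain ⟨B, hB, hJ''⟩ :=
    exists_norm_fourierUnitInterval_le (ContDiff.deriv' (n := 1) hu).continuous_deriv_one
  set u₁ := |deriv u 1|
  set u₀ := |deriv u 0|
  refine ⟨2 * A + 2 * (u₁ + u₀ + B), by positivity, fun z => ?_⟩
  set S := fourierUnitInterval u z + fourierUnitInterval u (-z)
  set E := Real.exp |z.im|
  have hE : 1 ≤ E := Real.one_le_exp (abs_nonneg _)
  have him : |(-z).im| = |z.im| := by rw [neg_im, abs_neg]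
  have hexp (w : ℂ) (hw : |w.im| = |z.im|) : ‖cexp (I * w)‖ ≤ E := by
    simpa [hw] using norm_cexp_I_mul_le w (right_mem_Icc.2 zero_le_one)
  have hS : ‖S‖ ≤ 2 * A * E := by
    linarith [norm_add_le (fourierUnitInterval u z) (fourierUnitInterval u (-z)), hJ z,
      him ▸ hJ (-z)]
  have hS₂ : ‖z ^ 2 * S‖ ≤ 2 * (u₁ + u₀ + B) * E := by
    have h₁ : ‖((deriv u 1 : ℝ) : ℂ) * (cexp (I * z) + cexp (I * -z))‖ ≤ u₁ * (2 * E) := by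
      rw [norm_mul, norm_real, Real.norm_eq_abs]
      gcongr
      linarith [norm_add_le (cexp (I * z)) (cexp (I * -z)), hexp z rfl, hexp (-z) him]
    have h₀ : ‖2 * ((deriv u 0 : ℝ) : ℂ)‖ ≤ 2 * u₀ * E := by
      rw [norm_mul, norm_real, Real.norm_eq_abs, Complex.norm_two]
      nlinarith [abs_nonneg (deriv u 0)]
    have h₂ := norm_add_le (fourierUnitInterval (deriv (deriv u)) z)
      (fourierUnitInterval (deriv (deriv u)) (-z))
    rw [sq_mul_fourierUnitInterval_add_neg hu hu1]
    refine (norm_sub_le _ _).trans ((add_le_add ((norm_sub_le _ _).trans (add_le_add h₁ h₀))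
      (h₂.trans (add_le_add (hJ'' z) (hJ'' (-z))))).trans_eq ?_)
    rw [him]
    ring
  rw [le_div_iff₀ (by positivity)]
  calc ‖S‖ * (1 + ‖z‖ ^ 2) = ‖S‖ + ‖z ^ 2 * S‖ := by rw [norm_mul, norm_pow]; ring
    _ ≤ (2 * A + 2 * (u₁ + u₀ + B)) * E := by linarith

lemma intervalIntegral.integral_neg_eq_add_comp_neg {E : Type*} [NormedAddCommGroup E]
    [NormedSpace ℝ E] {f : ℝ → E} {a : ℝ} (hf : IntervalIntegrable f volume (-a) a) :
    ∫ x in -a..a, f x = (∫ x in 0..a, f x) + ∫ x in 0..a, f (-x) := by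
  have h0 : (0 : ℝ) ∈ uIcc (-a) a := by
    rw [mem_uIcc]
    rcases le_total 0 a with h | h
    · exact .inl ⟨by linarith, h⟩
    · exact .inr ⟨h, by linarith⟩
  rw [intervalIntegral.integral_comp_neg, neg_zero,
    ← intervalIntegral.integral_add_adjacent_intervals (hf.mono_set (uIcc_subset_uIcc_left h0))
      (hf.mono_set (uIcc_subset_uIcc_right h0)), add_comm]

lemma jF_neg (α : ℝ) : jF (-α) = jF α := by
  rw [jF, jF, abs_neg]

lemma jF_of_mem_Icc {α : ℝ} (hα : α ∈ Icc (0 : ℝ) 1) : jF α = 1 - α := by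
  rw [jF, abs_of_nonneg hα.1, max_eq_left (by linarith [hα.2])]

noncomputable def tsangProfile (b α : ℝ) : ℝ := (1 - α) / Real.cosh (b * α)

lemma contDiff_tsangProfile (b : ℝ) : ContDiff ℝ 2 (tsangProfile b) :=
  (contDiff_const.sub contDiff_id).div (Real.contDiff_cosh.comp (contDiff_const.mul contDiff_id))
    fun _ => (Real.cosh_pos _).ne'

lemma Kb_eq_fourierUnitInterval (b : ℝ) (z : ℂ) :
    Kb b z = 1 / (2 * Real.pi) *
      (fourierUnitInterval (tsangProfile b) z + fourierUnitInterval (tsangProfile b) (-z)) := by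
  have hcont : Continuous fun α : ℝ =>
      ((jF α / Real.cosh (b * α) : ℝ) : ℂ) * cexp (I * z * α) := by
    have hjF : Continuous jF := by unfold jF; fun_prop
    exact (continuous_ofReal.comp (hjF.div (by fun_prop) fun α => (Real.cosh_pos _).ne')).mul
      (by fun_prop)
  rw [Kb, intervalIntegral.integral_neg_eq_add_comp_neg (hcont.intervalIntegrable _ _)]
  unfold fourierUnitInterval
  congr 2 <;> refine intervalIntegral.integral_congr fun α hα => ?_
  all_goals
    rw [uIcc_of_le zero_le_one] at hα
    simp only [tsangProfile, jF_neg, jF_of_mem_Icc hα, mul_neg, neg_mul, Real.cosh_neg, ofReal_neg]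

theorem Kb_bound_general (b : ℝ) :
    ∃ C > 0, ∀ z : ℂ,
      ‖Kb b z‖ ≤ C * Real.exp |z.im| / (1 + ‖z‖ ^ 2) := by
  obtain ⟨C, hC, hS⟩ :=
    exists_norm_fourierUnitInterval_add_neg_le (contDiff_tsangProfile b) (by simp [tsangProfile])
  refine ⟨C / (2 * Real.pi), by positivity, fun z => ?_⟩
  have hnorm : ‖(1 / (2 * Real.pi) : ℂ)‖ = 1 / (2 * Real.pi) := by
    simp [abs_of_pos Real.pi_pos]
  rw [Kb_eq_fourierUnitInterval, norm_mul, hnorm]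
  calc _ ≤ 1 / (2 * Real.pi) * (C * Real.exp |z.im| / (1 + ‖z‖ ^ 2)) :=
      mul_le_mul_of_nonneg_left (hS z) (by positivity)
    _ = _ := by ring

/-- For `0 < b ≤ 1`, the Tsang kernel satisfies `|K_b(z)| ≤ C e^{|Im z|}/(1 + |z|²)`. -/
theorem Kb_bound (b : ℝ) (hb0 : 0 < b) (hb1 : b ≤ 1) :
    ∃ C > 0, ∀ z : ℂ,
      ‖Kb b z‖ ≤ C * Real.exp |z.im| / (1 + ‖z‖ ^ 2) :=
  Kb_bound_general b
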